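/- Define a map from involutions σ ∈ S_n to words μ ∈ {U,L,D}^n by μ_i = U if i < σ(i), μ_i = L if i = σ(i), μ_i = D if i > σ(i). Then μ is a Motzkin path: every prefix has at least as many U's as D's, and the total number of U's equals the total number of D's. -/

import Mathlib

open Finset

/-- Steps of a Motzkin path: up, level, down. -/
inductive Step | U | L | D
deriving DecidableEq

/-- Biane's word of an involution: `U` if `i < σ i`, `L` if `i = σ i`, `D` if `i > σ i`. -/
def bpath {n : ℕ} (σ : Equiv.Perm (Fin n)) (i : Fin n) : Step :=
  if i < σ i then Step.U else if σ i = i then Step.L else Step.D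

/-! An involution `σ` maps each `D`-position `i` to the `U`-position `σ i < i`; restricted to
a prefix this is an injection from its `D`'s into its `U`'s, and globally a bijection. -/

namespace Function.Involutive

variable {α : Type*} [LinearOrder α] [Fintype α] {σ : α → α}

theorem card_filter_apply_lt (hσ : Involutive σ) : #{i | σ i < i} = #{i | i < σ i} :=
  card_nbij' σ σ (fun i hi => by simpa [hσ i] using hi) (fun i hi => by simpa [hσ i] using hi)
    (fun i _ => hσ i) (fun i _ => hσ i)

theorem card_filter_and_apply_lt_le (hσ : Involutive σ) {P : α → Prop} [DecidablePred P]
    (hP : Antitone P) : #{i | P i ∧ σ i < i} ≤ #{i | P i ∧ i < σ i} := by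
  refine card_le_card_of_injOn σ (fun i hi => ?_) hσ.injective.injOn
  simp only [coe_filter, mem_univ, true_and, Set.mem_ofPred_eq] at hi ⊢
  exact ⟨hP hi.2.le hi.1, by rw [hσ]; exact hi.2⟩

end Function.Involutive

theorem bpath_eq_U_iff {n : ℕ} (σ : Equiv.Perm (Fin n)) (i : Fin n) :
    bpath σ i = Step.U ↔ i < σ i := by
  unfold bpath
  split_ifs <;> simp_all

theorem bpath_eq_D_iff {n : ℕ} (σ : Equiv.Perm (Fin n)) (i : Fin n) :
    bpath σ i = Step.D ↔ σ i < i := by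
  unfold bpath
  split_ifs with h₁ h₂
  · simpa using h₁.le
  · simp [h₂]
  · simpa using lt_of_le_of_ne (not_lt.mp h₁) h₂

/-- The word of an involution under Biane's map is a Motzkin path: each prefix has
at least as many `U`'s as `D`'s, and the total numbers of `U`'s and `D`'s agree. -/
theorem bpath_isMotzkin {n : ℕ} (σ : Equiv.Perm (Fin n)) (hinv : ∀ i, σ (σ i) = i) :
    (∀ k : ℕ, (Finset.univ.filter
          (fun i : Fin n => (i : ℕ) < k ∧ bpath σ i = Step.D)).card
        ≤ (Finset.univ.filter
          (fun i : Fin n => (i : ℕ) < k ∧ bpath σ i = Step.U)).card)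
    ∧ (Finset.univ.filter (fun i : Fin n => bpath σ i = Step.U)).card
      = (Finset.univ.filter (fun i : Fin n => bpath σ i = Step.D)).card := by
  have hσ : Function.Involutive σ := hinv
  simp only [bpath_eq_U_iff, bpath_eq_D_iff]
  exact ⟨fun k => hσ.card_filter_and_apply_lt_le fun _ _ hij hj => lt_of_le_of_lt hij hj,
    hσ.card_filter_apply_lt.symm⟩
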